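/- Pointwise domination of C by the maximal function of A: Let q ∈ (0,∞) and α > 0. Then for every measurable function f on X⁺ and every x ∈ X, C_q^α(f)(x)^q ≤ M(A_q^α(f)^q)(x), where M is the uncentred Hardy–Littlewood maximal operator. -/

import Mathlib

open MeasureTheory Metric Set
open scoped ENNReal NNReal

noncomputable section

variable {X : Type*}

/-- The measure `dμ(y) dt/t` on `X⁺ = X × (0,∞)`, modelled on `X × ℝ`
(supported on `{t > 0}`). -/
def upHalf [MeasurableSpace X] (μ : Measure X) : Measure (X × ℝ) :=
  μ.prod ((volume.restrict (Set.Ioi (0:ℝ))).withDensity fun t => ENNReal.ofReal t⁻¹)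

/-- The measure `dμ(y) dt` on `X⁺` (supported on `{t > 0}`). -/
def upHalf' [MeasurableSpace X] (μ : Measure X) : Measure (X × ℝ) :=
  μ.prod (volume.restrict (Set.Ioi (0:ℝ)))

/-- Cone of aperture `α` with vertex `x`. -/
def coneAt [PseudoMetricSpace X] (α : ℝ) (x : X) : Set (X × ℝ) :=
  {p | dist p.1 x < α * p.2}

/-- Tent of aperture `α` over `O ⊆ X`: the complement in `X⁺` of the union of the
cones of aperture `α` with vertices outside `O`. -/
def tentOver [PseudoMetricSpace X] (α : ℝ) (O : Set X) : Set (X × ℝ) :=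
  {p | 0 < p.2 ∧ ∀ x ∉ O, α * p.2 ≤ dist p.1 x}

/-- The `α`-shadow of `C ⊆ X⁺`: points whose cone meets `C`. -/
def shadowOf [PseudoMetricSpace X] (α : ℝ) (C : Set (X × ℝ)) : Set X :=
  {x | ∃ p ∈ C, p ∈ coneAt α x}

/-- The operator `A_q^α`:
`A_q^α(f)(x) = (∬_{Γ^α(x)} |f(y,t)|^q dμ(y)/V(y,αt) dt/t)^{1/q}`. -/
def Afun [PseudoMetricSpace X] [MeasurableSpace X] (μ : Measure X) (q α : ℝ)
    (f : X × ℝ → ℝ) (x : X) : ℝ≥0∞ :=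
  (∫⁻ p in coneAt α x,
      ENNReal.ofReal (|f p| ^ q) / μ (ball p.1 (α * p.2)) ∂upHalf μ) ^ (1/q)

/-- The truncated operator `A_q^α(·|h)`, integrating over the truncated cone
`Γ_h^α(x)`. -/
def AfunT [PseudoMetricSpace X] [MeasurableSpace X] (μ : Measure X) (q α h : ℝ)
    (f : X × ℝ → ℝ) (x : X) : ℝ≥0∞ :=
  (∫⁻ p in coneAt α x ∩ {p : X × ℝ | p.2 < h},
      ENNReal.ofReal (|f p| ^ q) / μ (ball p.1 (α * p.2)) ∂upHalf μ) ^ (1/q)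

/-- The Carleson operator `C_q^α`:
`C_q^α(f)(x) = sup_{B ∋ x} (μ(B)⁻¹ ∬_{T^α(B)} |f(y,t)|^q dμ(y) dt/t)^{1/q}`,
the supremum being over open balls containing `x`. -/
def Cfun [PseudoMetricSpace X] [MeasurableSpace X] (μ : Measure X) (q α : ℝ)
    (f : X × ℝ → ℝ) (x : X) : ℝ≥0∞ :=
  ⨆ (z : X) (ρ : ℝ) (_ : 0 < ρ ∧ x ∈ ball z ρ),
    ((μ (ball z ρ))⁻¹ *
      ∫⁻ p in tentOver α (ball z ρ), ENNReal.ofReal (|f p| ^ q) ∂upHalf μ) ^ (1/q)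

/-- The tent space quasi-norm `‖f‖_{T^{p,q,α}} = ‖A_q^α(f)‖_{L^p(X)}`. -/
def tNorm [PseudoMetricSpace X] [MeasurableSpace X] (μ : Measure X) (p q α : ℝ)
    (f : X × ℝ → ℝ) : ℝ≥0∞ :=
  (∫⁻ x, Afun μ q α f x ^ p ∂μ) ^ (1/p)

/-- The uncentred Hardy–Littlewood maximal operator applied to an
`ℝ≥0∞`-valued function. -/
def maxFun [PseudoMetricSpace X] [MeasurableSpace X] (μ : Measure X)
    (g : X → ℝ≥0∞) (x : X) : ℝ≥0∞ :=
  ⨆ (z : X) (ρ : ℝ) (_ : 0 < ρ ∧ x ∈ ball z ρ),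
    (μ (ball z ρ))⁻¹ * ∫⁻ y in ball z ρ, g y ∂μ

/-- `μ` is doubling: `V(x,2r) ≤ C V(x,r)` for all `x`, `r > 0`. -/
def DoublingMeas [PseudoMetricSpace X] [MeasurableSpace X] (μ : Measure X) : Prop :=
  ∃ C > (0:ℝ), ∀ (x : X) (r : ℝ), 0 < r →
    μ (ball x (2 * r)) ≤ ENNReal.ofReal C * μ (ball x r)

/-!
The vertices `x` whose cone `Γ^α(x)` contains `p = (y, t)` form the ball `B(y, αt)`, and for `p`
in the tent over a ball `B` this ball lies in `B`. Hence
`|f p|^q = ∫_B 1_{Γ^α(x)}(p) |f p|^q / V(y, αt) dμ(x)` on `T^α(B)`, and Tonelli gives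
`∬_{T^α(B)} |f|^q ≤ ∫_B A_q^α(f)^q dμ`: every average defining `C_q^α(f)(x)^q` is bounded by one of
the averages defining `M(A_q^α(f)^q)(x)`.

Tonelli needs the incidence set `{(x, p) | p ∈ Γ^α(x)}` to be measurable for the product
σ-algebra, which holds once `X` is second countable; this follows from σ-finiteness of `μ`
because every ball has positive measure.
-/

theorem exists_maximal_pairwise {α : Type*} (r : α → α → Prop) :
    ∃ S : Set α, Maximal (fun S : Set α => S.Pairwise r) S :=
  zorn_subset _ fun c hc hchain =>
    ⟨⋃₀ c, hchain.pairwise_sUnion.2 hc, fun _ => subset_sUnion_of_mem⟩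

section SecondCountable

variable [PseudoMetricSpace X] [MeasurableSpace X] [OpensMeasurableSpace X]
  (μ : Measure X) [SFinite μ]

/-- The balls of radius `ε / 2` around an `ε`-separated set are disjoint and have positive
measure; an s-finite measure admits only countably many such sets. -/
theorem Set.Pairwise.countable_of_measure_ball_pos
    (hpos : ∀ (x : X) (r : ℝ), 0 < r → 0 < μ (ball x r)) {ε : ℝ} (hε : 0 < ε) {S : Set X}
    (hS : S.Pairwise fun a b => ε ≤ dist a b) : S.Countable := by
  have hdisj : Pairwise (Function.onFun Disjoint fun s : S => ball (s : X) (ε / 2)) :=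
    fun a b hab => ball_disjoint_ball <| by
      rw [add_halves]; exact hS a.2 b.2 fun h => hab (Subtype.ext h)
  have hcount := Measure.countable_meas_pos_of_disjoint_iUnion (μ := μ)
    (fun _ => measurableSet_ball) hdisj
  rw [show {s : S | 0 < μ (ball s (ε / 2))} = univ from
    eq_univ_of_forall fun s => hpos s _ (half_pos hε)] at hcount
  exact countable_coe_iff.mp (countable_univ_iff.mp hcount)

/-- A maximal `ε`-separated set is countable and `ε`-dense. -/
theorem secondCountableTopology_of_measure_ball_pos
    (hpos : ∀ (x : X) (r : ℝ), 0 < r → 0 < μ (ball x r)) : SecondCountableTopology X := by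
  refine secondCountable_of_almost_dense_set fun ε hε => ?_
  obtain ⟨S, hS⟩ := exists_maximal_pairwise fun a b : X => ε ≤ dist a b
  refine ⟨S, hS.prop.countable_of_measure_ball_pos μ hpos hε, fun x => ?_⟩
  by_contra! hfar
  have hinsert : (insert x S).Pairwise fun a b => ε ≤ dist a b :=
    pairwise_insert.2 ⟨hS.prop, fun b hb _ => ⟨(hfar b hb).le, dist_comm x b ▸ (hfar b hb).le⟩⟩
  have hxS : x ∈ S := hS.eq_of_subset hinsert (subset_insert x S) ▸ mem_insert x S
  exact hε.not_gt (by simpa using hfar x hxS)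

end SecondCountable

instance [MeasurableSpace X] (μ : Measure X) [SFinite μ] : SFinite (upHalf μ) := by
  unfold upHalf; infer_instance

section Measurability

variable [PseudoMetricSpace X] [MeasurableSpace X] [OpensMeasurableSpace X] (α : ℝ)

theorem measurableSet_coneAt (x : X) : MeasurableSet (coneAt α x) :=
  (isOpen_lt (continuous_fst.dist continuous_const)
    (continuous_const.mul continuous_snd)).measurableSet

theorem measurableSet_tentOver (O : Set X) : MeasurableSet (tentOver α O) := by
  have : tentOver α O = {p : X × ℝ | 0 < p.2} ∩
      ⋂ (w : X) (_ : w ∉ O), {p : X × ℝ | α * p.2 ≤ dist p.1 w} := by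
    ext p; simp [tentOver]
  rw [this]
  exact (measurableSet_lt measurable_const measurable_snd).inter
    (isClosed_biInter fun w _ => isClosed_le (continuous_const.mul continuous_snd)
      (continuous_fst.dist continuous_const)).measurableSet

variable [SecondCountableTopology X]

theorem measurableSet_coneAt_incidence :
    MeasurableSet {z : X × (X × ℝ) | z.2 ∈ coneAt α z.1} :=
  (isOpen_lt ((continuous_fst.comp continuous_snd).dist continuous_fst)
    (continuous_const.mul (continuous_snd.comp continuous_snd))).measurableSet

theorem measurable_measure_ball (ν : Measure X) [SFinite ν] :
    Measurable fun p : X × ℝ => ν (ball p.1 (α * p.2)) :=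
  measurable_measure_prodMk_left (ν := ν) (s := {z : (X × ℝ) × X | dist z.2 z.1.1 < α * z.1.2})
    (isOpen_lt (continuous_snd.dist (continuous_fst.comp continuous_fst))
      (continuous_const.mul (continuous_snd.comp continuous_fst))).measurableSet

end Measurability

section Tents

variable [PseudoMetricSpace X] {α : ℝ}

theorem mem_coneAt_iff_mem_ball {x : X} {p : X × ℝ} :
    p ∈ coneAt α x ↔ x ∈ ball p.1 (α * p.2) :=
  mem_ball'.symm

theorem indicator_coneAt_eq_indicator_ball {M : Type*} [Zero M] (h : X × ℝ → M) (p : X × ℝ) :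
    (fun x => (coneAt α x).indicator h p) = (ball p.1 (α * p.2)).indicator fun _ => h p := by
  classical
  ext x
  simp only [indicator_apply, mem_coneAt_iff_mem_ball]

theorem ball_subset_of_mem_tentOver {O : Set X} {p : X × ℝ} (hp : p ∈ tentOver α O) :
    ball p.1 (α * p.2) ⊆ O := fun y hy => by
  by_contra hyO
  exact (hp.2 y hyO).not_gt (mem_ball'.mp hy)

variable [MeasurableSpace X] [OpensMeasurableSpace X] [SecondCountableTopology X]

theorem lintegral_tentOver_le_lintegral_coneAt (μ : Measure X) [SFinite μ]
    (ν : Measure (X × ℝ)) [SFinite ν]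
    (hpos : ∀ (x : X) (r : ℝ), 0 < r → 0 < μ (ball x r))
    (hfin : ∀ (x : X) (r : ℝ), 0 < r → μ (ball x r) < ∞)
    (hα : 0 < α) {g : X × ℝ → ℝ≥0∞} (hg : Measurable g) (O : Set X) :
    ∫⁻ p in tentOver α O, g p ∂ν
      ≤ ∫⁻ y in O, ∫⁻ p in coneAt α y, g p / μ (ball p.1 (α * p.2)) ∂ν ∂μ := by
  set h : X × ℝ → ℝ≥0∞ := fun p => g p / μ (ball p.1 (α * p.2))
  have hh : Measurable h := hg.div (measurable_measure_ball α μ)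
  have hvertices : ∀ p, ∫⁻ y in O, (coneAt α y).indicator h p ∂μ
      = h p * μ (ball p.1 (α * p.2) ∩ O) := fun p => by
    rw [indicator_coneAt_eq_indicator_ball, lintegral_indicator measurableSet_ball,
      setLIntegral_const, Measure.restrict_apply measurableSet_ball]
  have htent : ∀ p ∈ tentOver α O, g p = ∫⁻ y in O, (coneAt α y).indicator h p ∂μ := by
    intro p hp
    have hr : 0 < α * p.2 := mul_pos hα hp.1
    rw [hvertices, inter_eq_self_of_subset_left (ball_subset_of_mem_tentOver hp),
      ENNReal.div_mul_cancel (hpos _ _ hr).ne' (hfin _ _ hr).ne]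
  calc ∫⁻ p in tentOver α O, g p ∂ν
      = ∫⁻ p in tentOver α O, ∫⁻ y in O, (coneAt α y).indicator h p ∂μ ∂ν :=
        setLIntegral_congr_fun (measurableSet_tentOver α O) htent
    _ ≤ ∫⁻ p, ∫⁻ y in O, (coneAt α y).indicator h p ∂μ ∂ν := setLIntegral_le_lintegral _ _
    _ = ∫⁻ y in O, ∫⁻ p, (coneAt α y).indicator h p ∂ν ∂μ := by
        refine (lintegral_lintegral_swap (Measurable.aemeasurable ?_)).symm
        exact (hh.comp measurable_snd).indicator (measurableSet_coneAt_incidence α)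
    _ = ∫⁻ y in O, ∫⁻ p in coneAt α y, h p ∂ν ∂μ :=
        lintegral_congr fun y => lintegral_indicator (measurableSet_coneAt α y) h

end Tents

theorem Afun_rpow [PseudoMetricSpace X] [MeasurableSpace X] (μ : Measure X) {q : ℝ} (hq : q ≠ 0)
    (α : ℝ) (f : X × ℝ → ℝ) (y : X) :
    Afun μ q α f y ^ q
      = ∫⁻ p in coneAt α y, ENNReal.ofReal (|f p| ^ q) / μ (ball p.1 (α * p.2)) ∂upHalf μ := by
  rw [Afun, one_div, ENNReal.rpow_inv_rpow hq]

theorem setAverage_ball_le_maxFun [PseudoMetricSpace X] [MeasurableSpace X] (μ : Measure X)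
    (g : X → ℝ≥0∞) {x z : X} {ρ : ℝ} (hρ : 0 < ρ) (hx : x ∈ ball z ρ) :
    (μ (ball z ρ))⁻¹ * ∫⁻ y in ball z ρ, g y ∂μ ≤ maxFun μ g x :=
  le_iSup₂_of_le z ρ (le_iSup_of_le ⟨hρ, hx⟩ le_rfl)

/-- **Pointwise domination of `C` by the maximal function of `A`.** For
`q ∈ (0,∞)`, `α > 0`, every measurable `f` on `X⁺` and every `x ∈ X`,
`C_q^α(f)(x)^q ≤ M(A_q^α(f)^q)(x)`, where `M` is the uncentred
Hardy–Littlewood maximal operator. -/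
theorem carleson_le_maximal [MetricSpace X] [MeasurableSpace X] [BorelSpace X]
    (μ : Measure X) [SigmaFinite μ]
    (hpos : ∀ (x : X) (r : ℝ), 0 < r → 0 < μ (ball x r))
    (hfin : ∀ (x : X) (r : ℝ), 0 < r → μ (ball x r) < ∞)
    (q α : ℝ) (hq : 0 < q) (hα : 0 < α)
    (f : X × ℝ → ℝ) (hf : Measurable f) (x : X) :
    Cfun μ q α f x ^ q ≤ maxFun μ (fun y => Afun μ q α f y ^ q) x := by
  have := secondCountableTopology_of_measure_ball_pos μ hpos
  have hg : Measurable fun p => ENNReal.ofReal (|f p| ^ q) :=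
    ENNReal.measurable_ofReal.comp ((Real.continuous_rpow_const hq.le).measurable.comp hf.abs)
  rw [← ENNReal.le_rpow_inv_iff hq, Cfun]
  refine iSup₂_le fun z ρ => iSup_le fun ⟨hρ, hx⟩ => ?_
  rw [one_div]
  gcongr
  calc (μ (ball z ρ))⁻¹ * ∫⁻ p in tentOver α (ball z ρ), ENNReal.ofReal (|f p| ^ q) ∂upHalf μ
      ≤ (μ (ball z ρ))⁻¹ * ∫⁻ y in ball z ρ, Afun μ q α f y ^ q ∂μ := by
        simp only [Afun_rpow μ hq.ne']
        gcongr
        exact lintegral_tentOver_le_lintegral_coneAt μ _ hpos hfin hα hg _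
    _ ≤ maxFun μ (fun y => Afun μ q α f y ^ q) x := setAverage_ball_le_maxFun μ _ hρ hx
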